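/- Let M be a positive semidefinite complex d×d matrix, ε ≥ 0, and 0 ≤ η ≤ 1 with d ≥ 2. Then the supremum of tr(M·(ρ − e^ε·σ)) over all pairs of density matrices ρ, σ with D(ρ,σ) ≤ η equals η·λ_max(M) − (e^ε + η − 1)·λ_min(M), and this supremum is attained. -/

import Mathlib

open Matrix BigOperators
open scoped ComplexOrder

namespace QDP

variable {n : Type*} [Fintype n] [DecidableEq n]

/-- Trace distance `D(ρ,σ) = (1/2) tr |ρ - σ|`, where `|A| = sqrt (Aᴴ A)`. -/
noncomputable def traceDist (ρ σ : Matrix n n ℂ) : ℝ :=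
  (1 / 2 : ℝ) * (((Matrix.posSemidef_conjTranspose_mul_self (ρ - σ)).1.eigenvectorUnitary.1 *
    diagonal (((↑) : ℝ → ℂ) ∘ (√·) ∘
      (Matrix.posSemidef_conjTranspose_mul_self (ρ - σ)).1.eigenvalues) *
    (star (Matrix.posSemidef_conjTranspose_mul_self (ρ - σ)).1.eigenvectorUnitary :
      Matrix n n ℂ)).trace).re

/-- A density matrix: positive semidefinite with trace one. -/
def IsDensity (ρ : Matrix n n ℂ) : Prop := ρ.PosSemidef ∧ ρ.trace = 1

/-- The largest eigenvalue of a (Hermitian) matrix. -/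
noncomputable def lamMax (M : Matrix n n ℂ) : ℝ :=
  if h : M.IsHermitian then ⨆ i, h.eigenvalues i else 0

/-- The smallest eigenvalue of a (Hermitian) matrix. -/
noncomputable def lamMin (M : Matrix n n ℂ) : ℝ :=
  if h : M.IsHermitian then ⨅ i, h.eigenvalues i else 0

/-- Application of a quantum channel given by Kraus matrices. -/
noncomputable def applyChan {ι : Type*} [Fintype ι] (E : ι → Matrix n n ℂ)
    (ρ : Matrix n n ℂ) : Matrix n n ℂ := ∑ j, E j * ρ * (E j)ᴴ

/-- The dual of a quantum channel given by Kraus matrices. -/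
noncomputable def dualChan {ι : Type*} [Fintype ι] (E : ι → Matrix n n ℂ)
    (M : Matrix n n ℂ) : Matrix n n ℂ := ∑ j, (E j)ᴴ * M * E j

/-- `(ε,δ)`-differential privacy within `η` of the quantum algorithm `(E, M)`. -/
def IsDP {ι : Type*} [Fintype ι] {O : Type*} [Fintype O]
    (E : ι → Matrix n n ℂ) (M : O → Matrix n n ℂ) (ε δ η : ℝ) : Prop :=
  ∀ ρ σ : Matrix n n ℂ, IsDensity ρ → IsDensity σ → traceDist ρ σ ≤ η →
    ∀ S : Finset O,
      (∑ k ∈ S, (M k * applyChan E ρ).trace).re ≤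
        Real.exp ε * (∑ k ∈ S, (M k * applyChan E σ).trace).re + δ

/-- Rank-one projection `|ψ⟩⟨ψ|`. -/
noncomputable def proj (ψ : n → ℂ) : Matrix n n ℂ := vecMulVec ψ (star ψ)

end QDP

/-!
Split `ρ - σ = P - Q` into its positive and negative parts. Since `tr ρ = tr σ`, both parts have
trace `D(ρ, σ) ≤ η`, so for `c = e^ε ≥ 1` the bounds `λ_min tr X ≤ tr (M X) ≤ λ_max tr X`
(`X ≥ 0`) give
`tr (M (ρ - c σ)) = tr (M P) - tr (M Q) - (c - 1) tr (M σ) ≤ η λ_max - η λ_min - (c - 1) λ_min`.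
In an eigenbasis of `M`, `ρ = η |max⟩⟨max| + (1 - η) |min⟩⟨min|` and `σ = |min⟩⟨min|` attain
the bound.
-/

namespace Matrix

open Unitary Polynomial

section conjDiagonal

variable {n : Type*} [Fintype n] [DecidableEq n]

noncomputable def conjDiagonal (U : unitaryGroup n ℂ) (f : n → ℝ) : Matrix n n ℂ :=
  conjStarAlgAut ℂ _ U (diagonal (Complex.ofReal ∘ f))

lemma IsHermitian.eq_conjDiagonal {A : Matrix n n ℂ} (hA : A.IsHermitian) :
    A = conjDiagonal hA.eigenvectorUnitary hA.eigenvalues :=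
  hA.spectral_theorem

lemma trace_conjStarAlgAut (U : unitaryGroup n ℂ) (X : Matrix n n ℂ) :
    (conjStarAlgAut ℂ _ U X).trace = X.trace := by
  rw [conjStarAlgAut_apply, trace_mul_cycle, coe_star_mul_self, one_mul]

lemma trace_conjDiagonal (U : unitaryGroup n ℂ) (f : n → ℝ) :
    (conjDiagonal U f).trace = ((∑ i, f i : ℝ) : ℂ) := by
  rw [conjDiagonal, trace_conjStarAlgAut, trace_diagonal, Complex.ofReal_sum]
  rfl

lemma conjDiagonal_mul (U : unitaryGroup n ℂ) (f g : n → ℝ) :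
    conjDiagonal U f * conjDiagonal U g = conjDiagonal U (f * g) := by
  rw [conjDiagonal, conjDiagonal, conjDiagonal, ← map_mul, diagonal_mul_diagonal]
  congr 2
  ext i
  simp

lemma conjDiagonal_sub (U : unitaryGroup n ℂ) (f g : n → ℝ) :
    conjDiagonal U f - conjDiagonal U g = conjDiagonal U (f - g) := by
  rw [conjDiagonal, conjDiagonal, conjDiagonal, ← map_sub, diagonal_sub]
  congr 2
  ext i
  simp

lemma smul_conjDiagonal (U : unitaryGroup n ℂ) (c : ℝ) (f : n → ℝ) :
    (c : ℂ) • conjDiagonal U f = conjDiagonal U (c • f) := by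
  rw [conjDiagonal, conjDiagonal, ← map_smul, ← diagonal_smul]
  congr 2
  ext i
  simp

lemma conjDiagonal_const (U : unitaryGroup n ℂ) (c : ℝ) :
    conjDiagonal U (fun _ ↦ c) = (c : ℂ) • 1 := by
  rw [conjDiagonal, ← map_one (conjStarAlgAut ℂ _ U), ← map_smul]
  congr 1
  ext i j
  simp [diagonal_apply, one_apply]

lemma conjDiagonal_isHermitian (U : unitaryGroup n ℂ) (f : n → ℝ) :
    (conjDiagonal U f).IsHermitian :=
  isHermitian_mul_mul_conjTranspose (U : Matrix n n ℂ)
    (isHermitian_diagonal_iff.mpr fun i ↦ Complex.conj_ofReal (f i))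

lemma conjDiagonal_posSemidef (U : unitaryGroup n ℂ) {f : n → ℝ} (hf : 0 ≤ f) :
    (conjDiagonal U f).PosSemidef :=
  (posSemidef_diagonal_iff.mpr fun i ↦ Complex.zero_le_real.mpr (hf i)).mul_mul_conjTranspose_same
    (U : Matrix n n ℂ)

lemma charpoly_conjDiagonal (U : unitaryGroup n ℂ) (f : n → ℝ) :
    (conjDiagonal U f).charpoly = ∏ i, (X - C (f i : ℂ)) := by
  rw [conjDiagonal, conjStarAlgAut_apply, charpoly_mul_comm, ← mul_assoc, coe_star_mul_self,
    one_mul, charpoly_diagonal]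
  rfl

lemma IsHermitian.map_eigenvalues_eq_of_eq_conjDiagonal {A : Matrix n n ℂ} (hA : A.IsHermitian)
    {U : unitaryGroup n ℂ} {f : n → ℝ} (h : A = conjDiagonal U f) :
    Finset.univ.val.map hA.eigenvalues = Finset.univ.val.map f := by
  have hroots : A.charpoly.roots = Finset.univ.val.map (fun i ↦ (f i : ℂ)) := by
    rw [h, charpoly_conjDiagonal,
      roots_prod _ _ (by simp [Finset.prod_ne_zero_iff, X_sub_C_ne_zero])]
    simp
  rw [hA.roots_charpoly_eq_eigenvalues] at hroots
  simpa [Multiset.map_map, Function.comp_def] using congr(Multiset.map Complex.re $hroots)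

end conjDiagonal

open scoped MatrixOrder in
lemma PosSemidef.re_trace_mul_nonneg {n : Type*} [Fintype n] {A B : Matrix n n ℂ}
    (hA : A.PosSemidef) (hB : B.PosSemidef) : 0 ≤ (A * B).trace.re := by
  classical
  obtain ⟨C, rfl⟩ := CStarAlgebra.nonneg_iff_eq_star_mul_self.mp hA.nonneg
  rw [mul_assoc, trace_mul_comm, star_eq_conjTranspose]
  exact (Complex.nonneg_iff.mp (hB.mul_mul_conjTranspose_same C).trace_nonneg).1

end Matrix

namespace QDP

open Matrix

variable {n : Type*} [Fintype n] [DecidableEq n] {M : Matrix n n ℂ}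

lemma traceDist_eq_of_sub_eq_conjDiagonal {ρ σ : Matrix n n ℂ} {U : unitaryGroup n ℂ}
    {f : n → ℝ} (h : ρ - σ = conjDiagonal U f) : traceDist ρ σ = (∑ i, |f i|) / 2 := by
  set hA := (posSemidef_conjTranspose_mul_self (ρ - σ)).1
  have hA_eq : (ρ - σ)ᴴ * (ρ - σ) = conjDiagonal U (f * f) := by
    rw [h, (conjDiagonal_isHermitian U f).eq, conjDiagonal_mul]
  have hsum : ∑ i, √(hA.eigenvalues i) = ∑ i, √(f i * f i) := by
    have := congr((Multiset.map Real.sqrt $(hA.map_eigenvalues_eq_of_eq_conjDiagonal hA_eq)).sum)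
    rwa [Multiset.map_map, Multiset.map_map] at this
  change 1 / 2 * (conjDiagonal hA.eigenvectorUnitary (fun i ↦ √(hA.eigenvalues i))).trace.re = _
  simp only [trace_conjDiagonal, Complex.ofReal_re, hsum, Real.sqrt_mul_self_eq_abs]
  ring

lemma eigenvalues_le_lamMax (hM : M.IsHermitian) (i : n) : hM.eigenvalues i ≤ lamMax M := by
  rw [lamMax, dif_pos hM]
  exact le_ciSup (Set.finite_range _).bddAbove i

lemma lamMin_le_eigenvalues (hM : M.IsHermitian) (i : n) : lamMin M ≤ hM.eigenvalues i := by
  rw [lamMin, dif_pos hM]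
  exact ciInf_le (Set.finite_range _).bddBelow i

lemma exists_eigenvalues_eq_lamMax [Nonempty n] (hM : M.IsHermitian) :
    ∃ i, hM.eigenvalues i = lamMax M := by
  rw [lamMax, dif_pos hM]
  exact exists_eq_ciSup_of_finite

lemma exists_eigenvalues_eq_lamMin [Nonempty n] (hM : M.IsHermitian) :
    ∃ i, hM.eigenvalues i = lamMin M := by
  rw [lamMin, dif_pos hM]
  exact exists_eq_ciInf_of_finite

lemma re_trace_mul_le_lamMax_mul (hM : M.IsHermitian) {X : Matrix n n ℂ} (hX : X.PosSemidef) :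
    (M * X).trace.re ≤ lamMax M * X.trace.re := by
  have hgap : ((lamMax M : ℂ) • 1 - M).PosSemidef := by
    nth_rewrite 2 [hM.eq_conjDiagonal]
    rw [← conjDiagonal_const hM.eigenvectorUnitary, conjDiagonal_sub]
    exact conjDiagonal_posSemidef _ fun i ↦ sub_nonneg.mpr (eigenvalues_le_lamMax hM i)
  have := hgap.re_trace_mul_nonneg hX
  rw [sub_mul, smul_mul, one_mul, trace_sub, trace_smul, Complex.sub_re, smul_eq_mul,
    Complex.re_ofReal_mul] at this
  linarith

lemma lamMin_mul_le_re_trace_mul (hM : M.IsHermitian) {X : Matrix n n ℂ} (hX : X.PosSemidef) :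
    lamMin M * X.trace.re ≤ (M * X).trace.re := by
  have hgap : (M - (lamMin M : ℂ) • 1).PosSemidef := by
    nth_rewrite 1 [hM.eq_conjDiagonal]
    rw [← conjDiagonal_const hM.eigenvectorUnitary, conjDiagonal_sub]
    exact conjDiagonal_posSemidef _ fun i ↦ sub_nonneg.mpr (lamMin_le_eigenvalues hM i)
  have := hgap.re_trace_mul_nonneg hX
  rw [sub_mul, smul_mul, one_mul, trace_sub, trace_smul, Complex.sub_re, smul_eq_mul,
    Complex.re_ofReal_mul] at this
  linarith

lemma exists_posSemidef_sub_eq {ρ σ : Matrix n n ℂ} (hA : (ρ - σ).IsHermitian)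
    (htr : ρ.trace = σ.trace) :
    ∃ P Q : Matrix n n ℂ, P.PosSemidef ∧ Q.PosSemidef ∧ ρ - σ = P - Q ∧
      P.trace.re = traceDist ρ σ ∧ Q.trace.re = traceDist ρ σ := by
  set U := hA.eigenvectorUnitary
  set μ := hA.eigenvalues
  have hμ : ρ - σ = conjDiagonal U μ := hA.eq_conjDiagonal
  have hsum : ∑ i, μ i = 0 := by
    have := congr(trace $hμ)
    rwa [trace_sub, htr, sub_self, trace_conjDiagonal, eq_comm, Complex.ofReal_eq_zero] at this
  have hpos_sub_neg : ∑ i, μ⁺ i - ∑ i, μ⁻ i = ∑ i, μ i := by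
    rw [← Finset.sum_sub_distrib]
    exact Finset.sum_congr rfl fun i _ ↦ posPart_sub_negPart (μ i)
  have hpos_add_neg : ∑ i, μ⁺ i + ∑ i, μ⁻ i = ∑ i, |μ i| := by
    rw [← Finset.sum_add_distrib]
    exact Finset.sum_congr rfl fun i _ ↦ posPart_add_negPart (μ i)
  have hD := traceDist_eq_of_sub_eq_conjDiagonal hμ
  refine ⟨conjDiagonal U μ⁺, conjDiagonal U μ⁻, conjDiagonal_posSemidef U (posPart_nonneg μ),
    conjDiagonal_posSemidef U (negPart_nonneg μ),
    by rw [conjDiagonal_sub, posPart_sub_negPart, hμ], ?_, ?_⟩ <;>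
  · rw [trace_conjDiagonal, Complex.ofReal_re, hD]
    linarith

lemma re_trace_mul_sub_smul_le {ρ σ : Matrix n n ℂ} (hM : M.IsHermitian) (hρ : IsDensity ρ)
    (hσ : IsDensity σ) {c η : ℝ} (hc : 1 ≤ c) (hD : traceDist ρ σ ≤ η) :
    (M * (ρ - (c : ℂ) • σ)).trace.re ≤ η * lamMax M - (c + η - 1) * lamMin M := by
  obtain ⟨P, Q, hP, hQ, hPQ, hPtr, hQtr⟩ :=
    exists_posSemidef_sub_eq (hρ.1.1.sub hσ.1.1) (hρ.2.trans hσ.2.symm)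
  have hσtr : σ.trace.re = 1 := by rw [hσ.2, Complex.one_re]
  have hMP := re_trace_mul_le_lamMax_mul hM hP
  have hMQ := lamMin_mul_le_re_trace_mul hM hQ
  have hMσ := lamMin_mul_le_re_trace_mul hM hσ.1
  have hMσ' := re_trace_mul_le_lamMax_mul hM hσ.1
  rw [hPtr] at hMP
  rw [hQtr] at hMQ
  rw [hσtr, mul_one] at hMσ hMσ'
  have hsplit : (M * (ρ - (c : ℂ) • σ)).trace.re
      = (M * P).trace.re - (M * Q).trace.re - (c - 1) * (M * σ).trace.re := by
    rw [show ρ - (c : ℂ) • σ = P - Q - ((c - 1 : ℝ) : ℂ) • σ by rw [← hPQ]; push_cast; module,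
      mul_sub, mul_sub, Matrix.mul_smul, trace_sub, trace_sub, trace_smul, Complex.sub_re,
      Complex.sub_re, smul_eq_mul, Complex.re_ofReal_mul]
  rw [hsplit]
  nlinarith [mul_le_mul_of_nonneg_left hD (sub_nonneg.mpr (hMσ.trans hMσ')),
    mul_le_mul_of_nonneg_left hMσ (sub_nonneg.mpr hc)]

lemma isDensity_conjDiagonal (U : unitaryGroup n ℂ) {f : n → ℝ} (hf : 0 ≤ f)
    (hsum : ∑ i, f i = 1) : IsDensity (conjDiagonal U f) :=
  ⟨conjDiagonal_posSemidef U hf, by rw [trace_conjDiagonal, hsum, Complex.ofReal_one]⟩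

lemma exists_isDensity_re_trace_mul_sub_smul_eq [Nonempty n] (hM : M.IsHermitian) {η : ℝ}
    (hη0 : 0 ≤ η) (hη1 : η ≤ 1) (c : ℝ) :
    ∃ ρ σ : Matrix n n ℂ, IsDensity ρ ∧ IsDensity σ ∧ traceDist ρ σ ≤ η ∧
      (M * (ρ - (c : ℂ) • σ)).trace.re = η * lamMax M - (c + η - 1) * lamMin M := by
  obtain ⟨i, hi⟩ := exists_eigenvalues_eq_lamMax hM
  obtain ⟨j, hj⟩ := exists_eigenvalues_eq_lamMin hM
  set U := hM.eigenvectorUnitary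
  let e : n → n → ℝ := fun k ↦ Pi.single k 1
  have he_nonneg (k : n) : 0 ≤ e k := Pi.single_nonneg.mpr zero_le_one
  have he_sum (k : n) : ∑ l, e k l = 1 := by simp [e]
  have he_abs_sum (k : n) : ∑ l, |e k l| = 1 := by
    simp_rw [abs_of_nonneg (he_nonneg k _), he_sum]
  have he_dot (g : n → ℝ) (k : n) : ∑ l, g l * e k l = g k := by simp [e, Pi.single_apply]
  refine ⟨conjDiagonal U (η • e i + (1 - η) • e j), conjDiagonal U (e j),
    isDensity_conjDiagonal U ?_ ?_, isDensity_conjDiagonal U (he_nonneg j) (he_sum j), ?_, ?_⟩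
  · exact add_nonneg (smul_nonneg hη0 (he_nonneg i))
      (smul_nonneg (sub_nonneg.mpr hη1) (he_nonneg j))
  · simp [Finset.sum_add_distrib, ← Finset.mul_sum, he_sum]
  · have hdiff : η • e i + (1 - η) • e j - e j = η • (e i - e j) := by module
    rw [traceDist_eq_of_sub_eq_conjDiagonal (conjDiagonal_sub U _ _), hdiff]
    calc (∑ l, |(η • (e i - e j)) l|) / 2 = η * (∑ l, |e i l - e j l|) / 2 := by
          simp only [Pi.smul_apply, Pi.sub_apply, smul_eq_mul, abs_mul, abs_of_nonneg hη0,
            ← Finset.mul_sum]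
      _ ≤ η * (∑ l, (|e i l| + |e j l|)) / 2 := by
          gcongr with l
          exact abs_sub _ _
      _ = η := by
          rw [Finset.sum_add_distrib, he_abs_sum, he_abs_sum]
          ring
  · nth_rewrite 1 [hM.eq_conjDiagonal]
    rw [smul_conjDiagonal, conjDiagonal_sub, conjDiagonal_mul, trace_conjDiagonal,
      Complex.ofReal_re]
    calc ∑ l, (hM.eigenvalues * (η • e i + (1 - η) • e j - c • e j)) l
        = η * ∑ l, hM.eigenvalues l * e i l + (1 - η - c) * ∑ l, hM.eigenvalues l * e j l := by
          simp only [Pi.mul_apply, Pi.add_apply, Pi.sub_apply, Pi.smul_apply, smul_eq_mul,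
            Finset.mul_sum, ← Finset.sum_add_distrib]
          exact Finset.sum_congr rfl fun l _ ↦ by ring
      _ = η * lamMax M - (c + η - 1) * lamMin M := by
          rw [he_dot, he_dot, hi, hj]
          ring

end QDP

open QDP in
/-- The supremum of `tr(M (ρ - e^ε σ))` over pairs of density matrices at trace distance
at most `η` equals `η λ_max(M) - (e^ε + η - 1) λ_min(M)`, and it is attained. -/
theorem trace_diff_isGreatest {d : ℕ} (hd : 2 ≤ d)
    (M : Matrix (Fin d) (Fin d) ℂ) (hM : M.PosSemidef)
    (ε η : ℝ) (hε : 0 ≤ ε) (hη0 : 0 ≤ η) (hη1 : η ≤ 1) :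
    IsGreatest
      {x : ℝ | ∃ ρ σ : Matrix (Fin d) (Fin d) ℂ, IsDensity ρ ∧ IsDensity σ ∧
        traceDist ρ σ ≤ η ∧ x = (M * (ρ - ((Real.exp ε : ℝ) : ℂ) • σ)).trace.re}
      (η * lamMax M - (Real.exp ε + η - 1) * lamMin M) := by
  have : Nonempty (Fin d) := ⟨⟨0, by omega⟩⟩
  constructor
  · obtain ⟨ρ, σ, hρ, hσ, hD, hval⟩ := exists_isDensity_re_trace_mul_sub_smul_eq hM.1 hη0 hη1 _
    exact ⟨ρ, σ, hρ, hσ, hD, hval.symm⟩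
  · rintro x ⟨ρ, σ, hρ, hσ, hD, rfl⟩
    exact re_trace_mul_sub_smul_le hM.1 hρ hσ (Real.one_le_exp hε) hD
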